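/- Let q(x) = p(x) + 1/(144(x+1)³) - 1/(144x³), where p(x) = (x + 4/3)ln(1 - 1/(2(x+4/3))) - (x + 1/3)ln(1 - 1/(2(x+1/3))) - (1/2)ln(1 + 1/x) - ln((2x+1)/(2x+2)). Then q''(x) < 0 for all x > 1, i.e., q is strictly concave on (1, ∞). -/

import Mathlib

open Real

noncomputable def p (x : ℝ) : ℝ :=
  (x + 4/3) * Real.log (1 - 1 / (2 * (x + 4/3)))
    - (x + 1/3) * Real.log (1 - 1 / (2 * (x + 1/3)))
    - (1/2) * Real.log (1 + 1 / x) - Real.log ((2 * x + 1) / (2 * x + 2))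

noncomputable def q (x : ℝ) : ℝ :=
  p x + 1 / (144 * (x + 1) ^ 3) - 1 / (144 * x ^ 3)

noncomputable def Qaux (y : ℝ) : ℝ :=
  (y + 4/3) * (Real.log (6*y+5) - Real.log (6*y+8))
  - (y + 1/3) * (Real.log (6*y-1) - Real.log (6*y+2))
  - (1/2) * (Real.log (y+1) - Real.log y)
  - (Real.log (2*y+1) - Real.log (2*y+2))
  + 1 / (144 * (y+1) ^ 3) - 1 / (144 * y ^ 3)

noncomputable def gaux (y : ℝ) : ℝ :=
  Real.log (6*y+5) - Real.log (6*y+8) - Real.log (6*y-1) + Real.log (6*y+2)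
  + (6*y+8)/(6*y+5) - (6*y+2)/(6*y-1) + 1/(2*y) - 1/(2*(y+1)) - 2/(2*y+1) + 1/(y+1)
  - 1/(48*(y+1)^4) + 1/(48*y^4)

lemma q_eq_Qaux : ∀ y ∈ Set.Ioi (1:ℝ), q y = Qaux y := by
  intro y hy
  simp only [Set.mem_Ioi] at hy
  have h5 : (6*y+5) ≠ 0 := by positivity
  have h8 : (6*y+8) ≠ 0 := by positivity
  have hm1 : (6*y-1) ≠ 0 := by nlinarith
  have h2 : (6*y+2) ≠ 0 := by positivity
  have hy0 : y ≠ 0 := by positivity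
  have hy1 : (y+1) ≠ 0 := by positivity
  have h21 : (2*y+1) ≠ 0 := by positivity
  have h22 : (2*y+2) ≠ 0 := by positivity
  have h43 : (y + 4/3) ≠ 0 := by positivity
  have h13 : (y + 1/3) ≠ 0 := by positivity
  have e1 : 1 - 1 / (2 * (y + 4/3)) = (6*y+5)/(6*y+8) := by
    field_simp; ring
  have e2 : 1 - 1 / (2 * (y + 1/3)) = (6*y-1)/(6*y+2) := by
    field_simp; ring
  have e3 : 1 + 1 / y = (y+1)/y := by
    field_simp
  simp only [q, p, Qaux, e1, e2, e3, Real.log_div h5 h8, Real.log_div hm1 h2,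
    Real.log_div hy1 hy0, Real.log_div h21 h22]

lemma Qaux_hasDeriv : ∀ y ∈ Set.Ioi (1:ℝ), HasDerivAt Qaux (gaux y) y := by
  intro y hy
  simp only [Set.mem_Ioi] at hy
  have h5 : (6*y+5) ≠ 0 := by positivity
  have h8 : (6*y+8) ≠ 0 := by positivity
  have hm1 : (6*y-1) ≠ 0 := by nlinarith
  have h2 : (6*y+2) ≠ 0 := by positivity
  have hy0 : y ≠ 0 := by positivity
  have hy1 : (y+1) ≠ 0 := by positivity
  have h21 : (2*y+1) ≠ 0 := by positivity
  have h22 : (2*y+2) ≠ 0 := by positivity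
  have l5 : HasDerivAt (fun y : ℝ => Real.log (6*y+5)) (6/(6*y+5)) y := by
    have h : HasDerivAt (fun y : ℝ => 6*y+5) 6 y := by
      simpa using ((hasDerivAt_id y).const_mul (6:ℝ)).add_const (5:ℝ)
    simpa using h.log h5
  have l8 : HasDerivAt (fun y : ℝ => Real.log (6*y+8)) (6/(6*y+8)) y := by
    have h : HasDerivAt (fun y : ℝ => 6*y+8) 6 y := by
      simpa using ((hasDerivAt_id y).const_mul (6:ℝ)).add_const (8:ℝ)
    simpa using h.log h8
  have lm1 : HasDerivAt (fun y : ℝ => Real.log (6*y-1)) (6/(6*y-1)) y := by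
    have h : HasDerivAt (fun y : ℝ => 6*y-1) 6 y := by
      simpa using ((hasDerivAt_id y).const_mul (6:ℝ)).sub_const (1:ℝ)
    simpa using h.log hm1
  have l2 : HasDerivAt (fun y : ℝ => Real.log (6*y+2)) (6/(6*y+2)) y := by
    have h : HasDerivAt (fun y : ℝ => 6*y+2) 6 y := by
      simpa using ((hasDerivAt_id y).const_mul (6:ℝ)).add_const (2:ℝ)
    simpa using h.log h2
  have ly1 : HasDerivAt (fun y : ℝ => Real.log (y+1)) (1/(y+1)) y := by
    have h : HasDerivAt (fun y : ℝ => y+1) 1 y := (hasDerivAt_id y).add_const 1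
    simpa using h.log hy1
  have ly : HasDerivAt (fun y : ℝ => Real.log y) (1/y) y := by
    simpa using (hasDerivAt_id y).log hy0
  have l21 : HasDerivAt (fun y : ℝ => Real.log (2*y+1)) (2/(2*y+1)) y := by
    have h : HasDerivAt (fun y : ℝ => 2*y+1) 2 y := by
      simpa using ((hasDerivAt_id y).const_mul (2:ℝ)).add_const (1:ℝ)
    simpa using h.log h21
  have l22 : HasDerivAt (fun y : ℝ => Real.log (2*y+2)) (2/(2*y+2)) y := by
    have h : HasDerivAt (fun y : ℝ => 2*y+2) 2 y := by
      simpa using ((hasDerivAt_id y).const_mul (2:ℝ)).add_const (2:ℝ)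
    simpa using h.log h22
  have d1 : HasDerivAt (fun y : ℝ => (y + 4/3) * (Real.log (6*y+5) - Real.log (6*y+8)))
      (1 * (Real.log (6*y+5) - Real.log (6*y+8)) + (y + 4/3) * (6/(6*y+5) - 6/(6*y+8))) y :=
    ((hasDerivAt_id y).add_const (4/3)).mul (l5.sub l8)
  have d2 : HasDerivAt (fun y : ℝ => (y + 1/3) * (Real.log (6*y-1) - Real.log (6*y+2)))
      (1 * (Real.log (6*y-1) - Real.log (6*y+2)) + (y + 1/3) * (6/(6*y-1) - 6/(6*y+2))) y :=
    ((hasDerivAt_id y).add_const (1/3)).mul (lm1.sub l2)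
  have d3 : HasDerivAt (fun y : ℝ => (1/2 : ℝ) * (Real.log (y+1) - Real.log y))
      ((1/2 : ℝ) * (1/(y+1) - 1/y)) y := (ly1.sub ly).const_mul (1/2)
  have hden1 : HasDerivAt (fun y : ℝ => 144 * (y+1)^3) (144 * (3 * (y+1)^2 * 1)) y := by
    exact (((hasDerivAt_id y).add_const 1).pow 3).const_mul 144
  have hden1ne : (144 * (y+1)^3 : ℝ) ≠ 0 := by positivity
  have dr1 : HasDerivAt (fun y : ℝ => 1 / (144 * (y+1)^3))
      ((0 * (144 * (y+1)^3) - 1 * (144 * (3 * (y+1)^2 * 1))) / (144 * (y+1)^3)^2) y :=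
    (hasDerivAt_const y 1).div hden1 hden1ne
  have hden2 : HasDerivAt (fun y : ℝ => 144 * y^3) (144 * (3 * y^2 * 1)) y := by
    exact ((hasDerivAt_id y).pow 3).const_mul 144
  have hden2ne : (144 * y^3 : ℝ) ≠ 0 := by positivity
  have dr2 : HasDerivAt (fun y : ℝ => 1 / (144 * y^3))
      ((0 * (144 * y^3) - 1 * (144 * (3 * y^2 * 1))) / (144 * y^3)^2) y :=
    (hasDerivAt_const y 1).div hden2 hden2ne
  have H := ((((d1.sub d2).sub d3).sub (l21.sub l22)).add dr1).sub dr2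
  have HQ : HasDerivAt Qaux _ y := H
  convert HQ using 1
  unfold gaux
  field_simp
  ring

lemma deriv_q_eq : ∀ y ∈ Set.Ioi (1:ℝ), deriv q y = gaux y := by
  intro y hy
  have hev : q =ᶠ[nhds y] Qaux :=
    Filter.eventuallyEq_of_mem (isOpen_Ioi.mem_nhds hy) q_eq_Qaux
  rw [hev.deriv_eq, (Qaux_hasDeriv y hy).deriv]

theorem q_concave (x : ℝ) (hx : 1 < x) : deriv (deriv q) x < 0 := by
  have hev : deriv q =ᶠ[nhds x] gaux :=
    Filter.eventuallyEq_of_mem (isOpen_Ioi.mem_nhds hx) deriv_q_eq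
  rw [hev.deriv_eq]
  have h5 : (0:ℝ) < 6*x+5 := by linarith
  have h8 : (0:ℝ) < 6*x+8 := by linarith
  have hm1 : (0:ℝ) < 6*x-1 := by linarith
  have h2 : (0:ℝ) < 6*x+2 := by linarith
  have hx0 : (0:ℝ) < x := by linarith
  have hx1 : (0:ℝ) < x+1 := by linarith
  have h21 : (0:ℝ) < 2*x+1 := by linarith
  have h22 : (0:ℝ) < 2*x+2 := by linarith
  have a5 : HasDerivAt (fun y : ℝ => 6*y+5) 6 x := by
    simpa using ((hasDerivAt_id x).const_mul (6:ℝ)).add_const (5:ℝ)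
  have a8 : HasDerivAt (fun y : ℝ => 6*y+8) 6 x := by
    simpa using ((hasDerivAt_id x).const_mul (6:ℝ)).add_const (8:ℝ)
  have am1 : HasDerivAt (fun y : ℝ => 6*y-1) 6 x := by
    simpa using ((hasDerivAt_id x).const_mul (6:ℝ)).sub_const (1:ℝ)
  have a2 : HasDerivAt (fun y : ℝ => 6*y+2) 6 x := by
    simpa using ((hasDerivAt_id x).const_mul (6:ℝ)).add_const (2:ℝ)
  have l5 : HasDerivAt (fun y : ℝ => Real.log (6*y+5)) (6/(6*x+5)) x := by
    simpa using a5.log h5.ne'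
  have l8 : HasDerivAt (fun y : ℝ => Real.log (6*y+8)) (6/(6*x+8)) x := by
    simpa using a8.log h8.ne'
  have lm1 : HasDerivAt (fun y : ℝ => Real.log (6*y-1)) (6/(6*x-1)) x := by
    simpa using am1.log hm1.ne'
  have l2 : HasDerivAt (fun y : ℝ => Real.log (6*y+2)) (6/(6*x+2)) x := by
    simpa using a2.log h2.ne'
  have dq1 : HasDerivAt (fun y : ℝ => (6*y+8)/(6*y+5))
      ((6*(6*x+5) - (6*x+8)*6)/(6*x+5)^2) x := a8.div a5 h5.ne'
  have dq2 : HasDerivAt (fun y : ℝ => (6*y+2)/(6*y-1))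
      ((6*(6*x-1) - (6*x+2)*6)/(6*x-1)^2) x := a2.div am1 hm1.ne'
  have b2x : HasDerivAt (fun y : ℝ => 2*y) 2 x := by
    simpa using (hasDerivAt_id x).const_mul (2:ℝ)
  have dq3 : HasDerivAt (fun y : ℝ => 1/(2*y))
      ((0*(2*x) - 1*2)/(2*x)^2) x := (hasDerivAt_const x 1).div b2x (by positivity)
  have b2x1 : HasDerivAt (fun y : ℝ => 2*(y+1)) (2*1) x :=
    ((hasDerivAt_id x).add_const 1).const_mul 2
  have dq4 : HasDerivAt (fun y : ℝ => 1/(2*(y+1)))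
      ((0*(2*(x+1)) - 1*(2*1))/(2*(x+1))^2) x := (hasDerivAt_const x 1).div b2x1 (by positivity)
  have b21 : HasDerivAt (fun y : ℝ => 2*y+1) 2 x := by
    simpa using ((hasDerivAt_id x).const_mul (2:ℝ)).add_const (1:ℝ)
  have dq5 : HasDerivAt (fun y : ℝ => 2/(2*y+1))
      ((0*(2*x+1) - 2*2)/(2*x+1)^2) x := (hasDerivAt_const x 2).div b21 h21.ne'
  have bx1 : HasDerivAt (fun y : ℝ => y+1) 1 x := (hasDerivAt_id x).add_const 1
  have dq6 : HasDerivAt (fun y : ℝ => 1/(y+1))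
      ((0*(x+1) - 1*1)/(x+1)^2) x := (hasDerivAt_const x 1).div bx1 hx1.ne'
  have b48a : HasDerivAt (fun y : ℝ => 48*(y+1)^4) (48*(4*(x+1)^3*1)) x :=
    (((hasDerivAt_id x).add_const 1).pow 4).const_mul 48
  have dq7 : HasDerivAt (fun y : ℝ => 1/(48*(y+1)^4))
      ((0*(48*(x+1)^4) - 1*(48*(4*(x+1)^3*1)))/(48*(x+1)^4)^2) x :=
    (hasDerivAt_const x 1).div b48a (by positivity)
  have b48b : HasDerivAt (fun y : ℝ => 48*y^4) (48*(4*x^3*1)) x :=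
    ((hasDerivAt_id x).pow 4).const_mul 48
  have dq8 : HasDerivAt (fun y : ℝ => 1/(48*y^4))
      ((0*(48*x^4) - 1*(48*(4*x^3*1)))/(48*x^4)^2) x :=
    (hasDerivAt_const x 1).div b48b (by positivity)
  have H := (((((((((((l5.sub l8).sub lm1).add l2).add dq1).sub dq2).add dq3).sub dq4).sub dq5).add dq6).sub dq7).add dq8)
  have HG : HasDerivAt gaux _ x := H
  have ht : (0:ℝ) < x - 1 := by linarith
  have key : deriv gaux x =
      (-(6780036 + 50421819*(x-1) + 166596550*(x-1)^2 + 322415601*(x-1)^3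
        + 405307306*(x-1)^4 + 346439295*(x-1)^5 + 204449525*(x-1)^6 + 82629900*(x-1)^7
        + 22094730*(x-1)^8 + 3618864*(x-1)^9 + 305208*(x-1)^10 + 7776*(x-1)^11))
      / (3*(6*x+5)^2*(6*x+8)*(6*x-1)^2*(6*x+2)*x^5*(x+1)^5*(2*x+1)^2) := by
    rw [HG.deriv]
    field_simp
    ring
  rw [key]
  apply div_neg_of_neg_of_pos
  · nlinarith [ht, pow_pos ht 2, pow_pos ht 3, pow_pos ht 4, pow_pos ht 5, pow_pos ht 6,
      pow_pos ht 7, pow_pos ht 8, pow_pos ht 9, pow_pos ht 10, pow_pos ht 11]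
  · exact mul_pos (mul_pos (mul_pos (mul_pos (mul_pos (mul_pos (mul_pos
      (by norm_num : (0:ℝ) < 3) (pow_pos h5 2)) h8) (pow_pos hm1 2)) h2)
      (pow_pos hx0 5)) (pow_pos hx1 5)) (pow_pos h21 2)
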